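/- For every integer b ≥ 1, every y ∈ ℤ and every α ≥ 0, the b-bit phase-quantizer transition probabilities evaluated at phase θ = 0 satisfy the reflection symmetry W_{(2^{b−1}−y) mod 2^b}^{(b)}(α, 0) = W_{(2^{b−1}−1+y) mod 2^b}^{(b)}(α, 0). -/

import Mathlib

open MeasureTheory Real

noncomputable section

/-- Argument of a complex number taking values in `[0, 2π)`. -/
def arg2pi (z : ℂ) : ℝ := if 0 ≤ Complex.arg z then Complex.arg z else Complex.arg z + 2 * π

/-- The quantization sector `R_y` of a `b`-bit phase quantizer. -/
def sector (b y : ℕ) : Set ℂ :=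
  {z : ℂ | z ≠ 0 ∧ 2 * π * y / 2 ^ b ≤ arg2pi z ∧ arg2pi z < 2 * π * (y + 1) / 2 ^ b}

/-- Transition probability `W_y^{(b)}(α, θ)` of the `b`-bit phase-quantized Gaussian channel. -/
def W (b y : ℕ) (α θ : ℝ) : ℝ :=
  ∫ z in sector b y,
    (1 / π) *
      Real.exp (-(‖z - (Real.sqrt α : ℂ) * Complex.exp ((θ : ℂ) * Complex.I)‖ ^ 2))

/-- Transition probability with integer output index, understood modulo `2^b`. -/
def Wz (b : ℕ) (y : ℤ) (α θ : ℝ) : ℝ := W b ((y % (2 ^ b : ℤ)).toNat) α θ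

/-- `x ↦ -x log₂ x`, with the convention `0 log₂ 0 = 0`. -/
def nH (x : ℝ) : ℝ := -(x * Real.logb 2 x)

/-- Conditional output entropy `H(Y | U = √α e^{iθ})`. -/
def hEnt (b : ℕ) (α θ : ℝ) : ℝ := ∑ y ∈ Finset.range (2 ^ b), nH (W b y α θ)

/-- `W_y^{(b)}(u)` for a complex channel input `u`. -/
def Wu (b y : ℕ) (u : ℂ) : ℝ := W b y (‖u‖ ^ 2) (arg2pi u)

/-- Output probability `p_y` under input distribution `μ`. -/
def outP (b : ℕ) (μ : Measure ℂ) (y : ℕ) : ℝ := ∫ u, Wu b y u ∂μ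

/-- Mutual information of the `b`-bit phase-quantized Gaussian channel with input law `μ`. -/
def mutInfo (b : ℕ) (μ : Measure ℂ) : ℝ :=
  (∑ y ∈ Finset.range (2 ^ b), nH (outP b μ y)) -
    ∫ u, ∑ y ∈ Finset.range (2 ^ b), nH (Wu b y u) ∂μ

/-- Rotation of the complex plane by the angle `2π/2^b`. -/
def rot (b : ℕ) : ℂ → ℂ := fun u => Complex.exp (((2 * π / 2 ^ b : ℝ) : ℂ) * Complex.I) * u

/-- A measure on `ℂ` is `2π/2^b`-symmetric if it is invariant under rotation by `2π/2^b`. -/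
def RotSymm (b : ℕ) (μ : Measure ℂ) : Prop := Measure.map (rot b) μ = μ

/-!
At `θ = 0` the Gaussian density is centred on the real axis, so it is invariant under complex
conjugation, which preserves Lebesgue measure. Conjugation sends a nonzero argument `φ` to
`2π - φ`, hence maps the sector `R_{y₂}` onto `R_{y₁}` up to boundary rays (null sets) whenever
`y₁ + y₂ + 1 = 2^b`. The two indices of the theorem sum to `2^b - 1` modulo `2^b`, and since their
residues lie in `[0, 2^b)`, the residues sum to exactly `2^b - 1`.
-/

open ComplexConjugate

lemma measurable_arg2pi : Measurable arg2pi := by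
  unfold arg2pi
  exact Measurable.ite (measurableSet_le measurable_const Complex.measurable_arg)
    Complex.measurable_arg (Complex.measurable_arg.add_const _)

lemma measurableSet_sector (b y : ℕ) : MeasurableSet (sector b y) :=
  (measurableSet_singleton 0).compl.inter
    ((measurableSet_le measurable_const measurable_arg2pi).inter
      (measurableSet_lt measurable_arg2pi measurable_const))

lemma arg2pi_zero : arg2pi 0 = 0 := by
  simp [arg2pi]

lemma norm_mul_exp_arg2pi_mul_I (z : ℂ) : ‖z‖ * Complex.exp (arg2pi z * Complex.I) = z := by
  unfold arg2pi
  split_ifs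
  · exact Complex.norm_mul_exp_arg_mul_I z
  · push_cast
    rw [add_mul, Complex.exp_add, Complex.exp_two_pi_mul_I, mul_one,
      Complex.norm_mul_exp_arg_mul_I]

lemma arg2pi_conj {z : ℂ} (hz : arg2pi z ≠ 0) : arg2pi (conj z) = 2 * π - arg2pi z := by
  have hz' : Complex.arg z ≠ 0 := by
    contrapose! hz
    simp [arg2pi, hz]
  unfold arg2pi
  rw [Complex.arg_conj]
  rcases hz'.lt_or_gt with h | h <;> split_ifs <;>
    linarith [Complex.neg_pi_lt_arg z, Complex.arg_le_pi z]

-- A ray from the origin lies on a proper real subspace of `ℂ`.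
lemma volume_setOf_arg2pi_eq (c : ℝ) : volume {z : ℂ | arg2pi z = c} = 0 := by
  refine measure_mono_null (t := (ℝ ∙ Complex.exp (c * Complex.I) : Submodule ℝ ℂ)) ?_
    (Measure.addHaar_submodule _ _ fun htop => ?_)
  · rintro z rfl
    exact Submodule.mem_span_singleton.2
      ⟨‖z‖, by rw [Complex.real_smul, norm_mul_exp_arg2pi_mul_I]⟩
  · have := finrank_span_singleton (K := ℝ) (Complex.exp_ne_zero (c * Complex.I))
    rw [htop, finrank_top, Complex.finrank_real_complex] at this
    norm_num at this

lemma conj_preimage_sector_ae_eq {b y₁ y₂ : ℕ} (h : y₁ + y₂ + 1 = 2 ^ b) :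
    conj ⁻¹' sector b y₂ =ᵐ[volume] sector b y₁ := by
  set a := 2 * π * y₁ / 2 ^ b
  set a' := 2 * π * (y₁ + 1) / 2 ^ b
  have hy : (y₂ : ℝ) = 2 ^ b - y₁ - 1 := by
    have : ((y₁ + y₂ + 1 : ℕ) : ℝ) = 2 ^ b := by exact_mod_cast h
    push_cast at this
    linarith
  have h₂ : 2 * π * y₂ / 2 ^ b = 2 * π - a' := by simp only [a', hy]; field_simp; ring
  have h₂' : 2 * π * (y₂ + 1) / 2 ^ b = 2 * π - a := by simp only [a, hy]; field_simp; ring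
  have hnull : volume ({z : ℂ | arg2pi z = 0} ∪ {z | arg2pi z = a} ∪ {z | arg2pi z = a'}) = 0 :=
    measure_union_null (measure_union_null (volume_setOf_arg2pi_eq _) (volume_setOf_arg2pi_eq _))
      (volume_setOf_arg2pi_eq _)
  rw [Filter.eventuallyEq_set]
  filter_upwards [measure_eq_zero_iff_ae_notMem.mp hnull] with z hz
  simp only [Set.mem_union, Set.mem_ofPred_eq, not_or] at hz
  obtain ⟨⟨hz0, hza⟩, hza'⟩ := hz
  have hne : z ≠ 0 := by rintro rfl; exact hz0 arg2pi_zero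
  simp only [sector, Set.mem_preimage, Set.mem_ofPred_eq, map_ne_zero, arg2pi_conj hz0, h₂, h₂']
  constructor
  · rintro ⟨-, hlo, hhi⟩
    exact ⟨hne, by linarith, lt_of_le_of_ne (by linarith) hza'⟩
  · rintro ⟨-, hlo, hhi⟩
    exact ⟨hne, by linarith, by linarith [lt_of_le_of_ne hlo (Ne.symm hza)]⟩

lemma W_zero_eq_of_add_add_one_eq {b y₁ y₂ : ℕ} (h : y₁ + y₂ + 1 = 2 ^ b) (α : ℝ) :
    W b y₁ α 0 = W b y₂ α 0 := by
  set f : ℂ → ℝ := fun z => (1 / π) * Real.exp (-(‖z - (Real.sqrt α : ℂ)‖ ^ 2))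
  have hf : ∀ z, f (conj z) = f z := fun z => by
    simp only [f, ← Complex.norm_conj (z - _), map_sub, Complex.conj_ofReal]
  have hW : ∀ y, W b y α 0 = ∫ z in sector b y, f z := fun y => by simp [W, f]
  calc W b y₁ α 0 = ∫ z in conj ⁻¹' sector b y₂, f z := by
        rw [hW, setIntegral_congr_set (conj_preimage_sector_ae_eq h)]
    _ = ∫ z in conj ⁻¹' sector b y₂, f (conj z) := by simp only [hf]
    _ = W b y₂ α 0 := by
        rw [hW]
        exact Complex.conjLIE.measurePreserving.setIntegral_preimage_emb
          Complex.conjLIE.toMeasurableEquiv.measurableEmbedding f _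

lemma Int.emod_add_emod_add_one_eq {n s t : ℤ} (hn : 0 < n) (h : n ∣ s + t + 1) :
    s % n + t % n + 1 = n := by
  obtain ⟨k, hk⟩ : n ∣ s % n + t % n + 1 := by
    have : s % n + t % n + 1 = s + t + 1 - n * (s / n + t / n) := by
      rw [Int.emod_def, Int.emod_def]; ring
    exact this ▸ dvd_sub h (dvd_mul_right _ _)
  have := Int.emod_nonneg s hn.ne'
  have := Int.emod_nonneg t hn.ne'
  have := Int.emod_lt_of_pos s hn
  have := Int.emod_lt_of_pos t hn
  have hk₁ : k = 1 := by
    have : 0 < k := pos_of_mul_pos_right (by omega : 0 < n * k) hn.le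
    have : k < 2 := lt_of_mul_lt_mul_left (by omega : n * k < n * 2) hn.le
    omega
  rw [hk, hk₁, mul_one]

theorem stmt_2_general (b : ℕ) (y : ℤ) (α : ℝ) :
    Wz b ((2 : ℤ) ^ (b - 1) - y) α 0 = Wz b ((2 : ℤ) ^ (b - 1) - 1 + y) α 0 := by
  apply W_zero_eq_of_add_add_one_eq
  have hn : (0 : ℤ) < 2 ^ b := by positivity
  have hdvd : (2 : ℤ) ^ b ∣ (2 ^ (b - 1) - y) + (2 ^ (b - 1) - 1 + y) + 1 := by
    rw [show (2 : ℤ) ^ (b - 1) - y + (2 ^ (b - 1) - 1 + y) + 1 = 2 ^ (b - 1 + 1) by ring]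
    exact pow_dvd_pow 2 (by omega)
  have := Int.emod_add_emod_add_one_eq hn hdvd
  have := Int.emod_nonneg (2 ^ (b - 1) - y) hn.ne'
  have := Int.emod_nonneg (2 ^ (b - 1) - 1 + y) hn.ne'
  have hcast : ((2 ^ b : ℕ) : ℤ) = 2 ^ b := by push_cast; rfl
  omega

/-- reflection symmetry of the transition probabilities at `θ = 0`. -/
theorem stmt_2 (b : ℕ) (hb : 1 ≤ b) (y : ℤ) (α : ℝ) (hα : 0 ≤ α) :
    Wz b ((2 : ℤ) ^ (b - 1) - y) α 0 = Wz b ((2 : ℤ) ^ (b - 1) - 1 + y) α 0 :=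
  stmt_2_general b y α

end
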